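/- The five-vertex L-operators satisfy the Yang–Baxter equation R₁₂(x ⊖ x')·L₁₃(x|t)·L₂₃(x'|t) = L₂₃(x'|t)·L₁₃(x|t)·R₁₂(x ⊖ x') on ℂ²⊗ℂ²⊗ℂ², where L(x|t) = [[σ⁺σ⁻ + (x⊖t)σ⁻σ⁺, (1+β(x⊖t))σ⁺],[σ⁻, σ⁻σ⁺]] (matrix in the first factor with operator entries on the third), and R(u), for u = x ⊖ x', is the 4×4 matrix with nonzero entries R₀₀,₀₀ = 1, R₀₁,₁₀ = 1, R₁₀,₀₁ = 1 + β(x'⊖x), R₁₀,₁₀ = x'⊖x, R₁₁,₁₁ = 1 (in the basis v₀⊗v₀, v₀⊗v₁, v₁⊗v₀, v₁⊗v₁). -/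

import Mathlib

/-- The five-vertex `L`-operator on `ℂ² ⊗ ℂ²` (auxiliary ⊗ quantum), with
`g = x ⊖ t`:  `L = [[σ⁺σ⁻ + g σ⁻σ⁺, (1+βg) σ⁺],[σ⁻, σ⁻σ⁺]]`, written as a
matrix indexed by pairs `(a,e)` (aux index, quantum index), `false ↔ v₀`. -/
def Lent12 {K : Type*} [Field K] (β g : K) : Matrix (Bool × Bool) (Bool × Bool) K :=
  Matrix.of fun p q =>
    match p, q with
    | (false, e), (false, f) => if e = f then (if e then 1 else g) else 0
    | (false, e), (true, f) => if e = true ∧ f = false then 1 + β * g else 0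
    | (true, e), (false, f) => if e = false ∧ f = true then 1 else 0
    | (true, e), (true, f) => if e = false ∧ f = false then 1 else 0

/-- The `R`-matrix with entries `a=1, b=0, c=1, c', b', a'=1` in the basis
`v₀⊗v₀, v₀⊗v₁, v₁⊗v₀, v₁⊗v₁`. -/
def Rent12 {K : Type*} [Field K] (bp cp : K) : Matrix (Bool × Bool) (Bool × Bool) K :=
  Matrix.of fun p q =>
    match p, q with
    | (false, false), (false, false) => 1
    | (false, true), (true, false) => 1
    | (true, false), (false, true) => cp
    | (true, false), (true, false) => bp
    | (true, true), (true, true) => 1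
    | _, _ => 0

/-- Embedding of a two-site operator into factors 1,2 of a triple tensor product. -/
def emb12 {K : Type*} [Field K] (M : Matrix (Bool × Bool) (Bool × Bool) K) :
    Matrix (Bool × Bool × Bool) (Bool × Bool × Bool) K :=
  Matrix.of fun p q => if p.2.2 = q.2.2 then M (p.1, p.2.1) (q.1, q.2.1) else 0

/-- Embedding into factors 1,3. -/
def emb13 {K : Type*} [Field K] (M : Matrix (Bool × Bool) (Bool × Bool) K) :
    Matrix (Bool × Bool × Bool) (Bool × Bool × Bool) K :=
  Matrix.of fun p q => if p.2.1 = q.2.1 then M (p.1, p.2.2) (q.1, q.2.2) else 0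

/-- Embedding into factors 2,3. -/
def emb23 {K : Type*} [Field K] (M : Matrix (Bool × Bool) (Bool × Bool) K) :
    Matrix (Bool × Bool × Bool) (Bool × Bool × Bool) K :=
  Matrix.of fun p q => if p.1 = q.1 then M (p.2.1, p.2.2) (q.2.1, q.2.2) else 0

set_option maxHeartbeats 4000000 in
private lemma yb_aux {K : Type*} [Field K] (β g g' bp cp : K)
    (hb : bp * (1 + β * g) = g' - g) (hc : cp = 1 + β * bp) :
    emb12 (Rent12 bp cp) * emb13 (Lent12 β g) * emb23 (Lent12 β g')
      = emb23 (Lent12 β g') * emb13 (Lent12 β g) * emb12 (Rent12 bp cp) := by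
  ext ⟨a,b,c⟩ ⟨d,e,f⟩
  rcases a <;> rcases b <;> rcases c <;> rcases d <;> rcases e <;> rcases f <;>
  · simp only [Matrix.mul_apply, emb12, emb13, emb23, Lent12, Rent12, Matrix.of_apply,
      Fintype.sum_prod_type, Fintype.sum_bool]
    norm_num <;>
    first
    | ring1
    | linear_combination (-β) * hb + (-(1 + β * g)) * hc
    | linear_combination (-1 : K) * hb
    | linear_combination hb + g * hc
    | linear_combination hb + (g - g') * hc
    | linear_combination β * hb + (1 + β * g) * hc

/-- The Yang–Baxter equation
`R₁₂(x ⊖ x') L₁₃(x|t) L₂₃(x'|t) = L₂₃(x'|t) L₁₃(x|t) R₁₂(x ⊖ x')`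
for the five-vertex `L`-operators, with `u ⊖ v = (u-v)/(1+βv)`,
`R` having nonzero entries `a = 1`, `c = 1`, `c' = 1 + β(x'⊖x)`, `b' = x'⊖x`,
`a' = 1`. -/
theorem five_vertex_yang_baxter {K : Type*} [Field K] (β x x' t : K)
    (h1 : 1 + β * x ≠ 0) (h2 : 1 + β * x' ≠ 0) (h3 : 1 + β * t ≠ 0) :
    emb12 (Rent12 ((x' - x) / (1 + β * x)) (1 + β * ((x' - x) / (1 + β * x))))
        * emb13 (Lent12 β ((x - t) / (1 + β * t)))
        * emb23 (Lent12 β ((x' - t) / (1 + β * t)))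
      = emb23 (Lent12 β ((x' - t) / (1 + β * t)))
          * emb13 (Lent12 β ((x - t) / (1 + β * t)))
          * emb12 (Rent12 ((x' - x) / (1 + β * x)) (1 + β * ((x' - x) / (1 + β * x)))) := by
  apply yb_aux
  · field_simp
    rw [div_eq_iff (by rw [mul_comm]; exact h1)]
    ring
  · rfl
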